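/- Let R be a Γ-graded ring with graded stable range 1. Then the degree-zero subring 𝒜 0 has stable range 1: for all a, b ∈ 𝒜 0 such that a*c + b*d = 1 for some c, d ∈ 𝒜 0, there exist y ∈ 𝒜 0 and w ∈ 𝒜 0 with (a + b*y)*w = 1 and w*(a + b*y) = 1. -/
import Mathlib

/-- `R` has graded stable range 1. -/
def GradedStableRangeOne {Γ R : Type*} [AddGroup Γ] [Ring R]
    (𝒜 : Γ → AddSubgroup R) : Prop :=
  ∀ γ δ : Γ, ∀ a ∈ 𝒜 γ, ∀ b ∈ 𝒜 δ,
    (∃ c ∈ 𝒜 (-γ), ∃ d ∈ 𝒜 (-δ), a * c + b * d = 1) →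
    ∃ y ∈ 𝒜 (-δ + γ), IsUnit (a + b * y)

lemma proj_zero_mul_of_mem_zero {Γ R : Type*} [AddGroup Γ] [DecidableEq Γ] [Ring R]
    (𝒜 : Γ → AddSubgroup R) [GradedRing 𝒜] {u : R} (hu : u ∈ 𝒜 (0 : Γ)) (v : R) :
    ((DirectSum.decompose 𝒜 (u * v) (0 : Γ) : R)) =
      u * (DirectSum.decompose 𝒜 v (0 : Γ) : R) := by
  rw [DirectSum.decompose_mul, DirectSum.decompose_of_mem 𝒜 hu]
  exact DirectSum.coe_of_mul_apply_aux (A := 𝒜) ⟨u, hu⟩ _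
    (fun x => by simp)

lemma proj_zero_mul_of_mem_zero' {Γ R : Type*} [AddGroup Γ] [DecidableEq Γ] [Ring R]
    (𝒜 : Γ → AddSubgroup R) [GradedRing 𝒜] {u : R} (hu : u ∈ 𝒜 (0 : Γ)) (v : R) :
    ((DirectSum.decompose 𝒜 (v * u) (0 : Γ) : R)) =
      (DirectSum.decompose 𝒜 v (0 : Γ) : R) * u := by
  rw [DirectSum.decompose_mul, DirectSum.decompose_of_mem 𝒜 hu]
  exact DirectSum.coe_mul_of_apply_aux (A := 𝒜) _ ⟨u, hu⟩
    (fun x => by simp)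

/-- If a `Γ`-graded ring `R` has graded stable range 1, then the degree-zero subring `𝒜 0`
has stable range 1. -/
theorem stableRangeOne_zeroComponent_of_gradedStableRangeOne
    {Γ R : Type*} [AddGroup Γ] [DecidableEq Γ] [Ring R]
    (𝒜 : Γ → AddSubgroup R) [GradedRing 𝒜]
    (h : GradedStableRangeOne 𝒜) :
    ∀ a ∈ 𝒜 (0 : Γ), ∀ b ∈ 𝒜 (0 : Γ),
      (∃ c ∈ 𝒜 (0 : Γ), ∃ d ∈ 𝒜 (0 : Γ), a * c + b * d = 1) →
      ∃ y ∈ 𝒜 (0 : Γ), ∃ w ∈ 𝒜 (0 : Γ),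
        (a + b * y) * w = 1 ∧ w * (a + b * y) = 1 := by
  intro a ha b hb ⟨c, hc, d, hd, hcd⟩
  obtain ⟨y, hy, hu⟩ := h 0 0 a ha b hb
    ⟨c, by simpa using hc, d, by simpa using hd, hcd⟩
  rw [neg_zero, zero_add] at hy
  obtain ⟨u, hu⟩ := hu
  have hmem : (a + b * y) ∈ 𝒜 (0 : Γ) := by
    refine add_mem ha ?_
    simpa using SetLike.mul_mem_graded hb hy
  set v : R := ↑u⁻¹ with hv
  have huv : (a + b * y) * v = 1 := by rw [hv, ← hu, Units.mul_inv]
  have hvu : v * (a + b * y) = 1 := by rw [hv, ← hu, Units.inv_mul]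
  refine ⟨y, hy, (DirectSum.decompose 𝒜 v (0 : Γ) : R), SetLike.coe_mem _, ?_, ?_⟩
  · rw [← proj_zero_mul_of_mem_zero 𝒜 hmem v, huv]
    exact DirectSum.decompose_of_mem_same 𝒜 (SetLike.one_mem_graded 𝒜)
  · rw [← proj_zero_mul_of_mem_zero' 𝒜 hmem v, hvu]
    exact DirectSum.decompose_of_mem_same 𝒜 (SetLike.one_mem_graded 𝒜)
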